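/- arXiv:hep-th/0307241 — 2 statements merged into one kernel-verified Lean document; each statement's English description precedes it below -/
import Mathlib

section
/- For Schwartz functions f, g on R^{2N}, the Moyal product f ⋆_θ g, defined by (f ⋆_θ g)(x) = (πθ)^{-2N} ∬ f(y) g(z) e^{(2i/θ)(x−y)·S(x−z)} dy dz with S the standard symplectic matrix, is again a Schwartz function. -/
open MeasureTheory Complex

noncomputable section

/-- Euclidean dot product on `Fin n → ℝ`. -/
def dotR {n : ℕ} (x y : Fin n → ℝ) : ℝ := ∑ i, x i * y i

/-- The standard symplectic matrix `S = [[0, 1_N], [-1_N, 0]]` applied to a vector: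
`(S x)_j = x_{j+N}` for `j < N` and `(S x)_j = -x_{j-N}` for `j ≥ N`. -/
def symp (N : ℕ) (x : Fin (2 * N) → ℝ) : Fin (2 * N) → ℝ := fun j =>
  if _h : (j : ℕ) < N then x ⟨(j : ℕ) + N, by omega⟩
  else -x ⟨(j : ℕ) - N, by have := j.isLt; omega⟩

/-- The Moyal product
`(f ⋆_θ g)(x) = (πθ)^{-2N} ∬ f(y) g(z) e^{(2i/θ)(x−y)·S(x−z)} dy dz`. -/
def moyal (N : ℕ) (θ : ℝ) (f g : (Fin (2 * N) → ℝ) → ℂ) (x : Fin (2 * N) → ℝ) : ℂ :=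
  (((Real.pi * θ) ^ (2 * N))⁻¹ : ℝ) *
    ∫ y : Fin (2 * N) → ℝ, ∫ z : Fin (2 * N) → ℝ,
      f y * g z *
        Complex.exp (2 * Complex.I / (θ : ℂ) * ((dotR (x - y) (symp N (x - z)) : ℝ) : ℂ))

open scoped SchwartzMap FourierTransform RealInnerProductSpace

/-!
Since `S` is antisymmetric, `(x - y)·S(x - z) = y·Sz - y·Sx + z·Sx`. Hence
`(f ⋆_θ g)(x) = (πθ)^{-2N} 𝓕K(Sx/(πθ), -Sx/(πθ))` with `K(y, z) = f(y) g(z) e^{(2i/θ) y·Sz}`.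
The kernel `K` is a Schwartz function on `ℝ^{2N} × ℝ^{2N}`, being the tensor product `f ⊗ g`
multiplied by a phase of temperate growth; so is its Fourier transform, and composing with the
injective linear map `x ↦ (Sx, -Sx)/(πθ)` preserves the Schwartz class.
-/

theorem ContinuousLinearMap.norm_iteratedFDeriv_comp_right_le {𝕜 D E F : Type*}
    [NontriviallyNormedField 𝕜] [NormedAddCommGroup D] [NormedSpace 𝕜 D]
    [NormedAddCommGroup E] [NormedSpace 𝕜 E] [NormedAddCommGroup F] [NormedSpace 𝕜 F]
    (L : D →L[𝕜] E) {f : E → F} {k : WithTop ℕ∞} (hf : ContDiff 𝕜 k f) (x : D) {n : ℕ}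
    (hn : n ≤ k) :
    ‖iteratedFDeriv 𝕜 n (f ∘ L) x‖ ≤ ‖iteratedFDeriv 𝕜 n f (L x)‖ * ‖L‖ ^ n := by
  rw [L.iteratedFDeriv_comp_right hf x hn]
  exact (ContinuousMultilinearMap.norm_compContinuousLinearMap_le _ fun _ : Fin n => L).trans_eq
    (by simp)

lemma ContinuousLinearMap.exists_norm_le_of_injective {D E : Type*} [NormedAddCommGroup D]
    [NormedSpace ℝ D] [FiniteDimensional ℝ D] [NormedAddCommGroup E] [NormedSpace ℝ E]
    (L : D →L[ℝ] E) (hL : Function.Injective L) :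
    ∃ (k : ℕ) (C : ℝ), ∀ x, ‖x‖ ≤ C * (1 + ‖L x‖) ^ k := by
  obtain ⟨K, -, hK⟩ := L.toLinearMap.exists_antilipschitzWith (LinearMap.ker_eq_bot.2 hL)
  refine ⟨1, K, fun x => ?_⟩
  have h := hK.le_mul_dist x 0
  simp only [dist_zero_right, ContinuousLinearMap.coe_coe, map_zero] at h
  nlinarith [K.2]

lemma Prod.norm_le_one_add_norm_mul_one_add_norm {D E : Type*} [SeminormedAddCommGroup D]
    [SeminormedAddCommGroup E] (w : D × E) : ‖w‖ ≤ (1 + ‖w.1‖) * (1 + ‖w.2‖) := by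
  rw [Prod.norm_def]
  apply max_le <;> nlinarith [norm_nonneg w.1, norm_nonneg w.2]

namespace SchwartzMap

variable {D E F R : Type*} [NormedAddCommGroup D] [NormedSpace ℝ D]
  [NormedAddCommGroup E] [NormedSpace ℝ E] [NormedAddCommGroup F] [NormedSpace ℝ F]
  [NormedRing R] [NormedAlgebra ℝ R]

lemma one_add_norm_pow_mul_norm_iteratedFDeriv_comp_le (f : 𝓢(E, F)) (L : D →L[ℝ] E)
    (hL : ‖L‖ ≤ 1) {k n i : ℕ} (hi : i ≤ n) (x : D) :
    (1 + ‖L x‖) ^ k * ‖iteratedFDeriv ℝ i (f ∘ L) x‖ ≤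
      2 ^ k * (Finset.Iic (k, n)).sup (fun m => SchwartzMap.seminorm ℝ m.1 m.2) f := by
  have hcomp : ‖iteratedFDeriv ℝ i (f ∘ L) x‖ ≤ ‖iteratedFDeriv ℝ i f (L x)‖ :=
    (L.norm_iteratedFDeriv_comp_right_le (f.smooth ⊤) x (mod_cast le_top)).trans
      (mul_le_of_le_one_right (norm_nonneg _) (pow_le_one₀ (norm_nonneg _) hL))
  grw [hcomp]
  exact one_add_le_sup_seminorm_apply (m := (k, n)) le_rfl hi f (L x)

/-- By Leibniz' rule, each term of `D^n (f ⊗ g)` is `D^i f (y) ⊗ D^(n-i) g (z)`, and the weight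
`‖(y, z)‖^k` splits as `(1 + ‖y‖)^k (1 + ‖z‖)^k`. -/
lemma norm_pow_mul_norm_iteratedFDeriv_tensor_le (f : 𝓢(D, R)) (g : 𝓢(E, R)) (k n : ℕ)
    (w : D × E) :
    ‖w‖ ^ k * ‖iteratedFDeriv ℝ n (fun w : D × E => f w.1 * g w.2) w‖ ≤
      2 ^ n * ((2 ^ k * (Finset.Iic (k, n)).sup (fun m => SchwartzMap.seminorm ℝ m.1 m.2) f) *
        (2 ^ k * (Finset.Iic (k, n)).sup (fun m => SchwartzMap.seminorm ℝ m.1 m.2) g)) := by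
  set A := 2 ^ k * (Finset.Iic (k, n)).sup (fun m => SchwartzMap.seminorm ℝ m.1 m.2) f
  set B := 2 ^ k * (Finset.Iic (k, n)).sup (fun m => SchwartzMap.seminorm ℝ m.1 m.2) g
  set fst := ContinuousLinearMap.fst ℝ D E
  set snd := ContinuousLinearMap.snd ℝ D E
  have hf (i : ℕ) (hi : i ∈ Finset.range (n + 1)) :=
    one_add_norm_pow_mul_norm_iteratedFDeriv_comp_le f fst
      (ContinuousLinearMap.norm_fst_le ℝ D E) (k := k) (Nat.lt_succ_iff.1 (Finset.mem_range.1 hi)) w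
  have hg (i : ℕ) :=
    one_add_norm_pow_mul_norm_iteratedFDeriv_comp_le g snd
      (ContinuousLinearMap.norm_snd_le ℝ D E) (k := k) (Nat.sub_le n i) w
  calc ‖w‖ ^ k * ‖iteratedFDeriv ℝ n (fun w : D × E => (f ∘ fst) w * (g ∘ snd) w) w‖
      ≤ ((1 + ‖w.1‖) * (1 + ‖w.2‖)) ^ k * ∑ i ∈ Finset.range (n + 1), (n.choose i : ℝ) *
          ‖iteratedFDeriv ℝ i (f ∘ fst) w‖ * ‖iteratedFDeriv ℝ (n - i) (g ∘ snd) w‖ := by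
        gcongr
        · exact Prod.norm_le_one_add_norm_mul_one_add_norm w
        · exact norm_iteratedFDeriv_mul_le ((f.smooth ⊤).comp fst.contDiff)
            ((g.smooth ⊤).comp snd.contDiff) w (mod_cast le_top)
    _ = ∑ i ∈ Finset.range (n + 1), (n.choose i : ℝ) *
          (((1 + ‖w.1‖) ^ k * ‖iteratedFDeriv ℝ i (f ∘ fst) w‖) *
            ((1 + ‖w.2‖) ^ k * ‖iteratedFDeriv ℝ (n - i) (g ∘ snd) w‖)) := by
        rw [mul_pow, Finset.mul_sum]
        exact Finset.sum_congr rfl fun i _ => by ring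
    _ ≤ ∑ i ∈ Finset.range (n + 1), (n.choose i : ℝ) * (A * B) :=
        Finset.sum_le_sum fun i hi => mul_le_mul_of_nonneg_left
          (mul_le_mul (hf i hi) (hg i) (by positivity) (by positivity)) (by positivity)
    _ = 2 ^ n * (A * B) := by
        rw [← Finset.sum_mul, ← Nat.cast_sum, Nat.sum_range_choose, Nat.cast_pow, Nat.cast_ofNat]

def tensor (f : 𝓢(D, R)) (g : 𝓢(E, R)) : 𝓢(D × E, R) where
  toFun w := f w.1 * g w.2
  smooth' := ((f.smooth ⊤).comp contDiff_fst).mul ((g.smooth ⊤).comp contDiff_snd)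
  decay' k n := ⟨_, norm_pow_mul_norm_iteratedFDeriv_tensor_le f g k n⟩

@[simp] lemma tensor_apply (f : 𝓢(D, R)) (g : 𝓢(E, R)) (w : D × E) :
    tensor f g w = f w.1 * g w.2 := rfl

end SchwartzMap

lemma Complex.iteratedDeriv_exp_ofReal_mul_I (n : ℕ) :
    iteratedDeriv n (fun t : ℝ => exp (t * I)) = fun t : ℝ => I ^ n * exp (t * I) := by
  induction n with
  | zero => simp
  | succ n ih =>
    rw [iteratedDeriv_succ, ih]
    funext t
    rw [((((hasDerivAt_mul_const I).comp_ofReal (z := t)).cexp).const_mul (I ^ n)).deriv]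
    ring

lemma Complex.hasTemperateGrowth_exp_ofReal_mul_I :
    (fun t : ℝ => exp (t * I)).HasTemperateGrowth := by
  refine ⟨contDiff_exp.comp (ofRealCLM.contDiff.mul contDiff_const), fun n => ⟨0, 1, fun t => ?_⟩⟩
  rw [norm_iteratedFDeriv_eq_norm_iteratedDeriv, iteratedDeriv_exp_ofReal_mul_I]
  simp

-- Not found by instance search; it makes Schwartz maps on `(ι → ℝ) × (κ → ℝ)` integrable.
instance {ι κ : Type*} [Fintype ι] [Fintype κ] :
    (volume : Measure ((ι → ℝ) × (κ → ℝ))).IsAddHaarMeasure :=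
  Measure.prod.instIsAddHaarMeasure _ _

namespace EuclideanSpace

variable (ι κ : Type*) [Fintype ι] [Fintype κ]

/-- The Fourier transform on Schwartz space needs an inner product space, which the sup-normed
`(ι → ℝ) × (κ → ℝ)` is not; it is transported along this equivalence. -/
def sumEquivProdPi : EuclideanSpace ℝ (ι ⊕ κ) ≃L[ℝ] (ι → ℝ) × (κ → ℝ) :=
  (PiLp.continuousLinearEquiv 2 ℝ _).trans (ContinuousLinearEquiv.sumPiEquivProdPi ℝ ι κ _)

lemma measurePreserving_sumEquivProdPi : MeasurePreserving (sumEquivProdPi ι κ) :=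
  (volume_measurePreserving_sumPiEquivProdPi _).comp (PiLp.volume_preserving_ofLp _)

lemma measurePreserving_sumEquivProdPi_symm : MeasurePreserving (sumEquivProdPi ι κ).symm :=
  (measurePreserving_sumEquivProdPi ι κ).symm (sumEquivProdPi ι κ).toHomeomorph.toMeasurableEquiv

variable {ι κ}

lemma inner_sumEquivProdPi_symm (p q : (ι → ℝ) × (κ → ℝ)) :
    ⟪(sumEquivProdPi ι κ).symm p, (sumEquivProdPi ι κ).symm q⟫ = p.1 ⬝ᵥ q.1 + p.2 ⬝ᵥ q.2 := by
  simp only [sumEquivProdPi, PiLp.inner_apply, Fintype.sum_sum_type, dotProduct]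
  simp [mul_comm]
  rfl

theorem fourier_comp_sumEquivProdPi {E : Type*} [NormedAddCommGroup E] [NormedSpace ℂ E]
    {F : (ι → ℝ) × (κ → ℝ) → E} (hF : Integrable F) (q : (ι → ℝ) × (κ → ℝ)) :
    𝓕 (F ∘ sumEquivProdPi ι κ) ((sumEquivProdPi ι κ).symm q) =
      ∫ y, ∫ z, 𝐞 (-(y ⬝ᵥ q.1 + z ⬝ᵥ q.2)) • F (y, z) := by
  have hint : Integrable (fun p => 𝐞 (-(p.1 ⬝ᵥ q.1 + p.2 ⬝ᵥ q.2)) • F p) := by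
    simpa only [ContinuousLinearMap.bilinearComp_apply, ContinuousLinearEquiv.coe_coe,
      innerSL_apply_apply, inner_sumEquivProdPi_symm] using
      (Real.fourierIntegral_convergent_iff' ((innerSL ℝ).bilinearComp
        ((sumEquivProdPi ι κ).symm : _ →L[ℝ] EuclideanSpace ℝ (ι ⊕ κ))
        ((sumEquivProdPi ι κ).symm : _ →L[ℝ] EuclideanSpace ℝ (ι ⊕ κ))) q).2 hF
  rw [Real.fourier_eq, ← (measurePreserving_sumEquivProdPi_symm ι κ).integral_comp
    (sumEquivProdPi ι κ).symm.toHomeomorph.measurableEmbedding]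
  simp only [Function.comp_apply, ContinuousLinearEquiv.apply_symm_apply, inner_sumEquivProdPi_symm]
  rw [Measure.volume_eq_prod] at hint ⊢
  exact integral_prod _ hint

end EuclideanSpace

lemma dotR_eq_dotProduct {n : ℕ} (u v : Fin n → ℝ) : dotR u v = u ⬝ᵥ v := rfl

section Moyal

variable {N : ℕ}

local notation "ℝ²ᴺ" => Fin (2 * N) → ℝ

lemma symp_add (x y : ℝ²ᴺ) : symp N (x + y) = symp N x + symp N y := by
  funext j
  simp only [symp, Pi.add_apply]
  split <;> ring

lemma symp_smul (r : ℝ) (x : ℝ²ᴺ) : symp N (r • x) = r • symp N x := by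
  funext j
  simp only [symp, Pi.smul_apply, smul_eq_mul]
  split <;> ring

lemma symp_symp (x : ℝ²ᴺ) : symp N (symp N x) = -x := by
  funext j
  simp only [symp, Pi.neg_apply]
  split_ifs with hj hj' hj'
  · omega
  · exact congrArg (- x ·) (Fin.ext (Nat.add_sub_cancel _ _))
  · exact congrArg (- x ·) (Fin.ext (Nat.sub_add_cancel (not_lt.1 hj)))
  · omega

variable (N) in
def sympL : ℝ²ᴺ →L[ℝ] ℝ²ᴺ :=
  LinearMap.toContinuousLinearMap
    { toFun := symp N
      map_add' := symp_add
      map_smul' := symp_smul }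

@[simp] lemma sympL_apply (x : ℝ²ᴺ) : sympL N x = symp N x := rfl

lemma dotR_symp_eq_sum (a b : ℝ²ᴺ) :
    dotR a (symp N b) = ∑ j : Fin N, (a ⟨j, by omega⟩ * b ⟨j + N, by omega⟩ -
      a ⟨j + N, by omega⟩ * b ⟨j, by omega⟩) := by
  rw [dotR, ← (finCongr (two_mul N)).symm.sum_comp, Fin.sum_univ_add, Finset.sum_sub_distrib,
    sub_eq_add_neg, ← Finset.sum_neg_distrib]
  congr 1 <;> refine Finset.sum_congr rfl fun j _ => ?_ <;> simp [symp] <;> left <;> rfl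

lemma dotR_symp_comm (a b : ℝ²ᴺ) : dotR a (symp N b) = -dotR b (symp N a) := by
  rw [dotR_symp_eq_sum, dotR_symp_eq_sum, ← Finset.sum_neg_distrib]
  exact Finset.sum_congr rfl fun j _ => by ring

lemma dotR_symp_self (a : ℝ²ᴺ) : dotR a (symp N a) = 0 := by
  linarith [dotR_symp_comm a a]

lemma dotR_sub_symp_sub (x y z : ℝ²ᴺ) :
    dotR (x - y) (symp N (x - z)) =
      dotR y (symp N z) - dotR y (symp N x) + dotR z (symp N x) := by
  have hself := dotR_symp_self x
  have hcomm := dotR_symp_comm x z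
  rw [← sympL_apply, map_sub, sympL_apply, sympL_apply]
  simp only [dotR_eq_dotProduct, sub_dotProduct, dotProduct_sub] at hself hcomm ⊢
  linarith

lemma hasTemperateGrowth_dotR_fst_symp_snd :
    (fun p : ℝ²ᴺ × ℝ²ᴺ => dotR p.1 (symp N p.2)).HasTemperateGrowth := by
  have h₁ (i : Fin (2 * N)) : (fun p : ℝ²ᴺ × ℝ²ᴺ => p.1 i).HasTemperateGrowth :=
    ContinuousLinearMap.hasTemperateGrowth
      ((ContinuousLinearMap.proj i).comp (ContinuousLinearMap.fst ℝ ℝ²ᴺ ℝ²ᴺ))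
  have h₂ (i : Fin (2 * N)) : (fun p : ℝ²ᴺ × ℝ²ᴺ => symp N p.2 i).HasTemperateGrowth :=
    ContinuousLinearMap.hasTemperateGrowth
      ((ContinuousLinearMap.proj i).comp ((sympL N).comp (ContinuousLinearMap.snd ℝ ℝ²ᴺ ℝ²ᴺ)))
  unfold dotR
  fun_prop

def moyalKernel (θ : ℝ) (f g : 𝓢(ℝ²ᴺ, ℂ)) : 𝓢(ℝ²ᴺ × ℝ²ᴺ, ℂ) :=
  SchwartzMap.smulLeftCLM ℂ (fun p => exp (↑(2 / θ * dotR p.1 (symp N p.2)) * I)) (f.tensor g)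

lemma moyalKernel_apply (θ : ℝ) (f g : 𝓢(ℝ²ᴺ, ℂ)) (p : ℝ²ᴺ × ℝ²ᴺ) :
    moyalKernel θ f g p = exp (↑(2 / θ * dotR p.1 (symp N p.2)) * I) * (f p.1 * g p.2) := by
  have hphase : (fun p : ℝ²ᴺ × ℝ²ᴺ =>
      exp (↑(2 / θ * dotR p.1 (symp N p.2)) * I)).HasTemperateGrowth :=
    hasTemperateGrowth_exp_ofReal_mul_I.comp
      ((Function.HasTemperateGrowth.const (2 / θ)).mul hasTemperateGrowth_dotR_fst_symp_snd)
  exact SchwartzMap.smulLeftCLM_apply_apply hphase _ p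

variable (N) in
def moyalFrequency (θ : ℝ) : ℝ²ᴺ →L[ℝ] EuclideanSpace ℝ (Fin (2 * N) ⊕ Fin (2 * N)) :=
  (EuclideanSpace.sumEquivProdPi (Fin (2 * N)) (Fin (2 * N))).symm.toContinuousLinearMap ∘L
    ((Real.pi * θ)⁻¹ • (sympL N).prod (-sympL N))

lemma moyalFrequency_injective {θ : ℝ} (hθ : θ ≠ 0) : Function.Injective (moyalFrequency N θ) := by
  refine (injective_iff_map_eq_zero _).2 fun x hx => ?_
  have hS : symp N x = 0 := by
    simpa [moyalFrequency, hθ, Real.pi_ne_zero] using hx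
  rw [← neg_neg x, ← symp_symp x, hS, ← sympL_apply, map_zero, neg_zero]

def moyalSchwartz {θ : ℝ} (hθ : θ ≠ 0) (f g : 𝓢(ℝ²ᴺ, ℂ)) : 𝓢(ℝ²ᴺ, ℂ) :=
  ((Real.pi * θ) ^ (2 * N))⁻¹ •
    SchwartzMap.compCLM ℂ (moyalFrequency N θ).hasTemperateGrowth
      ((moyalFrequency N θ).exists_norm_le_of_injective (moyalFrequency_injective hθ))
      (𝓕 (SchwartzMap.compCLMOfContinuousLinearEquiv ℂ (EuclideanSpace.sumEquivProdPi _ _)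
        (moyalKernel θ f g)))

lemma moyalSchwartz_apply {θ : ℝ} (hθ : θ ≠ 0) (f g : 𝓢(ℝ²ᴺ, ℂ)) (x : ℝ²ᴺ) :
    moyalSchwartz hθ f g x = moyal N θ f g x := by
  have hπ : (Real.pi : ℂ) ≠ 0 := ofReal_ne_zero.2 Real.pi_ne_zero
  have hθ' : (θ : ℂ) ≠ 0 := ofReal_ne_zero.2 hθ
  set q : ℝ²ᴺ × ℝ²ᴺ := (Real.pi * θ)⁻¹ • (symp N x, -symp N x)
  have hq : moyalFrequency N θ x = (EuclideanSpace.sumEquivProdPi _ _).symm q := rfl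
  rw [moyalSchwartz, smul_apply, SchwartzMap.compCLM_apply, Function.comp_apply,
    SchwartzMap.fourier_coe, SchwartzMap.compCLMOfContinuousLinearEquiv_apply, hq,
    EuclideanSpace.fourier_comp_sumEquivProdPi (moyalKernel θ f g).integrable, moyal,
    Complex.real_smul]
  congr 1
  refine integral_congr_ae (.of_forall fun y => integral_congr_ae (.of_forall fun z => ?_))
  simp only [q, moyalKernel_apply, dotR_sub_symp_sub, Circle.smul_def, Real.fourierChar_apply,
    smul_eq_mul, Prod.smul_fst, Prod.smul_snd, dotProduct_smul, dotProduct_neg,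
    ← dotR_eq_dotProduct]
  rw [← mul_assoc, ← exp_add, mul_comm]
  congr 2
  push_cast
  field_simp
  ring

end Moyal

/-- the Moyal product of two Schwartz functions on `ℝ^{2N}`
is again a Schwartz function. -/
theorem moyal_of_schwartz_is_schwartz (N : ℕ) (θ : ℝ) (hθ : 0 < θ)
    (f g : SchwartzMap ((Fin (2 * N)) → ℝ) ℂ) :
    ∃ h : SchwartzMap ((Fin (2 * N)) → ℝ) ℂ, ∀ x, h x = moyal N θ (⇑f) (⇑g) x :=
  ⟨moyalSchwartz hθ.ne' f g, moyalSchwartz_apply hθ.ne' f g⟩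
end
end

section
/- The Moyal product satisfies the Leibniz rule: for Schwartz functions f, g on R^{2N} and each coordinate index j, ∂_j(f ⋆_θ g) = (∂_j f) ⋆_θ g + f ⋆_θ (∂_j g). -/
open MeasureTheory Complex SchwartzMap

set_option maxHeartbeats 1000000

noncomputable section

namespace MoyalAux

variable {N : ℕ} {θ : ℝ}

abbrev EE (N : ℕ) := Fin (2 * N) → ℝ

/-- The (unit-modulus) phase factor of the Moyal kernel after translation. -/
def phase (N : ℕ) (θ : ℝ) (p : EE N × EE N) : ℂ :=
  Complex.exp (((2 / θ * dotR p.1 (symp N p.2) : ℝ) : ℂ) * Complex.I)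

lemma phase_eq (u v : EE N) :
    Complex.exp (2 * Complex.I / (θ : ℂ) * ((dotR u (symp N v) : ℝ) : ℂ))
      = phase N θ (u, v) := by
  unfold phase; congr 1; push_cast; ring

lemma norm_phase (p : EE N × EE N) : ‖phase N θ p‖ = 1 := by
  rw [phase, Complex.norm_exp_ofReal_mul_I]

lemma continuous_sympApply (i : Fin (2 * N)) :
    Continuous fun v : EE N => symp N v i := by
  unfold symp
  by_cases h : (i : ℕ) < N
  · simpa [h] using continuous_apply (⟨(i : ℕ) + N, by omega⟩ : Fin (2*N))
  · simp only [dif_neg h]; exact (continuous_apply (⟨(i : ℕ) - N, by have := i.isLt; omega⟩ : Fin (2*N))).neg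

lemma continuous_phase : Continuous (phase N θ) := by
  unfold phase
  refine Complex.continuous_exp.comp (Continuous.mul ?_ continuous_const)
  refine Complex.continuous_ofReal.comp (Continuous.mul continuous_const ?_)
  unfold dotR
  refine continuous_finset_sum _ fun i _ => ?_
  exact ((continuous_apply i).comp continuous_fst).mul
    ((continuous_sympApply i).comp continuous_snd)

/-- The translated Moyal kernel. -/
def ker (θ : ℝ) (f g : 𝓢(EE N, ℂ)) (x : EE N) (p : EE N × EE N) : ℂ :=
  f (x - p.1) * g (x - p.2) * phase N θ p

lemma continuous_ker (f g : 𝓢(EE N, ℂ)) (x : EE N) : Continuous (ker θ f g x) := by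
  unfold ker
  exact ((f.continuous.comp (continuous_const.sub continuous_fst)).mul
    (g.continuous.comp (continuous_const.sub continuous_snd))).mul continuous_phase

lemma integrable_ker (f g : 𝓢(EE N, ℂ)) (x : EE N) :
    Integrable (ker θ f g x) (volume : Measure (EE N × EE N)) := by
  have h1 : Integrable (fun u : EE N => f (x - u)) := f.integrable.comp_sub_left x
  have h2 : Integrable (fun v : EE N => g (x - v)) := g.integrable.comp_sub_left x
  have h12 : Integrable (fun p : EE N × EE N => f (x - p.1) * g (x - p.2))
      (volume : Measure (EE N × EE N)) := by
    rw [Measure.volume_eq_prod]; exact h1.mul_prod h2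
  have hb : Integrable
      (fun p : EE N × EE N => phase N θ p * (f (x - p.1) * g (x - p.2))) :=
    h12.bdd_mul continuous_phase.aestronglyMeasurable
      (ae_of_all _ fun p => le_of_eq (norm_phase p))
  exact hb.congr (ae_of_all _ fun p => by unfold ker; ring)

lemma moyal_eq (f g : 𝓢(EE N, ℂ)) (x : EE N) :
    moyal N θ ⇑f ⇑g x
      = (((Real.pi * θ) ^ (2 * N))⁻¹ : ℝ) * ∫ p : EE N × EE N, ker θ f g x p := by
  unfold moyal
  congr 1
  calc
    (∫ y : EE N, ∫ z : EE N, f y * g z *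
        Complex.exp (2 * Complex.I / (θ : ℂ) * ((dotR (x - y) (symp N (x - z)) : ℝ) : ℂ)))
      = ∫ u : EE N, ∫ z : EE N, f (x - u) * g z *
          Complex.exp (2 * Complex.I / (θ : ℂ) *
            ((dotR (x - (x - u)) (symp N (x - z)) : ℝ) : ℂ)) :=
        (integral_sub_left_eq_self (fun y => ∫ z : EE N, f y * g z *
          Complex.exp (2 * Complex.I / (θ : ℂ) *
            ((dotR (x - y) (symp N (x - z)) : ℝ) : ℂ))) volume x).symm
    _ = ∫ u : EE N, ∫ v : EE N, f (x - u) * g (x - v) *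
          Complex.exp (2 * Complex.I / (θ : ℂ) *
            ((dotR (x - (x - u)) (symp N (x - (x - v))) : ℝ) : ℂ)) := by
        congr 1; funext u
        exact (integral_sub_left_eq_self (fun z => f (x - u) * g z *
          Complex.exp (2 * Complex.I / (θ : ℂ) *
            ((dotR (x - (x - u)) (symp N (x - z)) : ℝ) : ℂ))) volume x).symm
    _ = ∫ u : EE N, ∫ v : EE N, ker θ f g x (u, v) := by
        simp only [sub_sub_cancel]
        congr 1; funext u; congr 1; funext v
        rw [phase_eq]; rfl
    _ = ∫ p : EE N × EE N, ker θ f g x p := by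
        have h := integrable_ker (θ := θ) f g x
        rw [Measure.volume_eq_prod] at h ⊢
        exact (integral_prod _ h).symm

/-- Decay bound for a Schwartz function. -/
lemma schwartz_decay {V : Type*} [NormedAddCommGroup V] [NormedSpace ℝ V]
    (f : 𝓢(EE N, V)) (k : ℕ) :
    ∃ C : ℝ, 0 ≤ C ∧ ∀ y, ‖f y‖ ≤ C * ((1 + ‖y‖) ^ k)⁻¹ := by
  refine ⟨2 ^ k * (Finset.Iic (k, 0)).sup (fun m => SchwartzMap.seminorm ℝ m.1 m.2) f,
    by positivity, fun y => ?_⟩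
  have h := one_add_le_sup_seminorm_apply (𝕜 := ℝ) (m := (k, 0)) le_rfl le_rfl f y
  rw [norm_iteratedFDeriv_zero] at h
  have hp : (0 : ℝ) < (1 + ‖y‖) ^ k := by positivity
  calc ‖f y‖ = ((1 + ‖y‖) ^ k * ‖f y‖) * ((1 + ‖y‖) ^ k)⁻¹ := by
        field_simp
    _ ≤ (2 ^ k * (Finset.Iic (k, 0)).sup (fun m => SchwartzMap.seminorm ℝ m.1 m.2) f)
          * ((1 + ‖y‖) ^ k)⁻¹ :=
        mul_le_mul_of_nonneg_right h (by positivity)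

lemma shift_bound {x x₀ u : EE N} (h : ‖x - x₀‖ ≤ 1) (k : ℕ) :
    ((1 + ‖x - u‖) ^ k)⁻¹ ≤ 2 ^ k * ((1 + ‖x₀ - u‖) ^ k)⁻¹ := by
  have h0 : ‖x₀ - u‖ ≤ ‖x₀ - x‖ + ‖x - u‖ := norm_sub_le_norm_sub_add_norm_sub _ _ _
  have h0' : ‖x₀ - x‖ ≤ 1 := by rwa [norm_sub_rev]
  have hnn : (0:ℝ) ≤ ‖x - u‖ := norm_nonneg _
  have h1 : 1 + ‖x₀ - u‖ ≤ 2 * (1 + ‖x - u‖) := by linarith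
  have h2 : (1 + ‖x₀ - u‖) ^ k ≤ 2 ^ k * (1 + ‖x - u‖) ^ k := by
    calc (1 + ‖x₀ - u‖) ^ k ≤ (2 * (1 + ‖x - u‖)) ^ k :=
          pow_le_pow_left₀ (by positivity) h1 k
      _ = 2 ^ k * (1 + ‖x - u‖) ^ k := mul_pow _ _ _
  have ha : (0 : ℝ) < (1 + ‖x - u‖) ^ k := by positivity
  have hb : (0 : ℝ) < (1 + ‖x₀ - u‖) ^ k := by positivity
  rw [← one_div, show (2:ℝ) ^ k * ((1 + ‖x₀ - u‖) ^ k)⁻¹ = 2 ^ k / (1 + ‖x₀ - u‖) ^ k by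
    rw [div_eq_mul_inv], div_le_div_iff₀ ha hb]
  nlinarith

lemma integrable_h (x₀ : EE N) (k : ℕ) (hk : 2 * N < k) :
    Integrable (fun u : EE N => ((1 + ‖x₀ - u‖) ^ k)⁻¹) (volume : Measure (EE N)) := by
  have h0 : Integrable (fun u : EE N => ((1 + ‖u‖) ^ k)⁻¹) volume := by
    have hr : (Module.finrank ℝ (EE N) : ℝ) < (k : ℝ) := by
      rw [Module.finrank_fin_fun]; exact_mod_cast hk
    have := integrable_one_add_norm (E := EE N) (μ := volume) hr
    refine this.congr (ae_of_all _ fun u => ?_)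
    show (1 + ‖u‖) ^ (-(k:ℝ)) = ((1 + ‖u‖) ^ k)⁻¹
    rw [Real.rpow_neg (by positivity), Real.rpow_natCast]
  exact h0.comp_sub_left x₀

/-- Derivative (in `x`) of the translated Moyal kernel. -/
def ker' (θ : ℝ) (f g : 𝓢(EE N, ℂ)) (x : EE N) (p : EE N × EE N) : (EE N) →L[ℝ] ℂ :=
  phase N θ p • (f (x - p.1) • fderiv ℝ g (x - p.2) + g (x - p.2) • fderiv ℝ f (x - p.1))

lemma hasFDerivAt_ker (f g : 𝓢(EE N, ℂ)) (p : EE N × EE N) (x : EE N) :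
    HasFDerivAt (fun x => ker θ f g x p) (ker' θ f g x p) x := by
  have hface : ∀ (h : 𝓢(EE N, ℂ)) (u : EE N),
      HasFDerivAt (fun x : EE N => h (x - u)) (fderiv ℝ h (x - u)) x := by
    intro h u
    have h1 : HasFDerivAt h (fderiv ℝ h (x - u)) (x - u) := h.differentiableAt.hasFDerivAt
    have h2 : HasFDerivAt (fun y : EE N => y - u) (ContinuousLinearMap.id ℝ (EE N)) x :=
      (hasFDerivAt_id x).sub_const u
    have := h1.comp x h2; rw [ContinuousLinearMap.comp_id] at this; exact this
  exact ((hface f p.1).mul (hface g p.2)).mul_const (phase N θ p)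

lemma continuous_ker' (f g : 𝓢(EE N, ℂ)) (x : EE N) : Continuous (ker' θ f g x) := by
  have hDf : Continuous fun p : EE N × EE N => fderiv ℝ f (x - p.1) := by
    have hsub1 : Continuous fun p : EE N × EE N => x - p.1 :=
      continuous_const.sub continuous_fst
    have := (SchwartzMap.fderivCLM ℝ (EE N) ℂ f).continuous.comp hsub1
    exact this
  have hDg : Continuous fun p : EE N × EE N => fderiv ℝ g (x - p.2) := by
    have hsub2 : Continuous fun p : EE N × EE N => x - p.2 :=
      continuous_const.sub continuous_snd
    have := (SchwartzMap.fderivCLM ℝ (EE N) ℂ g).continuous.comp hsub2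
    exact this
  unfold ker'
  exact continuous_phase.smul
    (((f.continuous.comp (continuous_const.sub continuous_fst)).smul hDg).add
      ((g.continuous.comp (continuous_const.sub continuous_snd)).smul hDf))

lemma norm_ker'_le (f g : 𝓢(EE N, ℂ)) (x : EE N) (p : EE N × EE N) :
    ‖ker' θ f g x p‖ ≤ ‖f (x - p.1)‖ * ‖fderiv ℝ g (x - p.2)‖
      + ‖g (x - p.2)‖ * ‖fderiv ℝ f (x - p.1)‖ := by
  rw [ker']
  calc ‖phase N θ p • (f (x - p.1) • fderiv ℝ (⇑g) (x - p.2)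
          + g (x - p.2) • fderiv ℝ (⇑f) (x - p.1))‖
      ≤ ‖phase N θ p‖ * ‖f (x - p.1) • fderiv ℝ (⇑g) (x - p.2)
          + g (x - p.2) • fderiv ℝ (⇑f) (x - p.1)‖ := ContinuousLinearMap.opNorm_smul_le _ _
    _ = ‖f (x - p.1) • fderiv ℝ (⇑g) (x - p.2)
          + g (x - p.2) • fderiv ℝ (⇑f) (x - p.1)‖ := by rw [norm_phase, one_mul]
    _ ≤ ‖f (x - p.1) • fderiv ℝ (⇑g) (x - p.2)‖
          + ‖g (x - p.2) • fderiv ℝ (⇑f) (x - p.1)‖ := norm_add_le _ _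
    _ ≤ ‖f (x - p.1)‖ * ‖fderiv ℝ (⇑g) (x - p.2)‖
          + ‖g (x - p.2)‖ * ‖fderiv ℝ (⇑f) (x - p.1)‖ :=
        add_le_add (ContinuousLinearMap.opNorm_smul_le _ _) (ContinuousLinearMap.opNorm_smul_le _ _)

lemma moyal_hasFDerivAt (f g : 𝓢(EE N, ℂ)) (x₀ : EE N) :
    HasFDerivAt (fun x => ∫ p : EE N × EE N, ker θ f g x p)
      (∫ p : EE N × EE N, ker' θ f g x₀ p) x₀ := by
  set k : ℕ := 2 * N + 1 with hk
  obtain ⟨Cf, hCf0, hCf⟩ := schwartz_decay f k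
  obtain ⟨Cg, hCg0, hCg⟩ := schwartz_decay g k
  obtain ⟨Cf', hCf'0, hCf'⟩ := schwartz_decay (SchwartzMap.fderivCLM ℝ (EE N) ℂ f) k
  obtain ⟨Cg', hCg'0, hCg'⟩ := schwartz_decay (SchwartzMap.fderivCLM ℝ (EE N) ℂ g) k
  have hDf : ∀ y, ‖fderiv ℝ f y‖ ≤ Cf' * ((1 + ‖y‖) ^ k)⁻¹ := by
    intro y; have := hCf' y; rwa [SchwartzMap.fderivCLM_apply] at this
  have hDg : ∀ y, ‖fderiv ℝ g y‖ ≤ Cg' * ((1 + ‖y‖) ^ k)⁻¹ := by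
    intro y; have := hCg' y; rwa [SchwartzMap.fderivCLM_apply] at this
  set B : ℝ := (Cf * Cg' + Cg * Cf') * (2 ^ k * 2 ^ k) with hB
  set bound : EE N × EE N → ℝ := fun p =>
    B * (((1 + ‖x₀ - p.1‖) ^ k)⁻¹ * ((1 + ‖x₀ - p.2‖) ^ k)⁻¹) with hbound
  have key : ∀ x, ‖x - x₀‖ ≤ 1 → ∀ p : EE N × EE N, ‖ker' θ f g x p‖ ≤ bound p := by
    intro x hx p
    have s1 := shift_bound (x₀ := x₀) (u := p.1) hx k
    have s2 := shift_bound (x₀ := x₀) (u := p.2) hx k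
    have a0 : (0:ℝ) ≤ ((1 + ‖x₀ - p.1‖) ^ k)⁻¹ := by positivity
    have b0 : (0:ℝ) ≤ ((1 + ‖x₀ - p.2‖) ^ k)⁻¹ := by positivity
    have hf1 : ‖f (x - p.1)‖ ≤ Cf * (2 ^ k * ((1 + ‖x₀ - p.1‖) ^ k)⁻¹) :=
      (hCf _).trans (mul_le_mul_of_nonneg_left s1 hCf0)
    have hg2 : ‖g (x - p.2)‖ ≤ Cg * (2 ^ k * ((1 + ‖x₀ - p.2‖) ^ k)⁻¹) :=
      (hCg _).trans (mul_le_mul_of_nonneg_left s2 hCg0)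
    have hdf1 : ‖fderiv ℝ f (x - p.1)‖ ≤ Cf' * (2 ^ k * ((1 + ‖x₀ - p.1‖) ^ k)⁻¹) :=
      (hDf _).trans (mul_le_mul_of_nonneg_left s1 hCf'0)
    have hdg2 : ‖fderiv ℝ g (x - p.2)‖ ≤ Cg' * (2 ^ k * ((1 + ‖x₀ - p.2‖) ^ k)⁻¹) :=
      (hDg _).trans (mul_le_mul_of_nonneg_left s2 hCg'0)
    refine (norm_ker'_le f g x p).trans ?_
    have t1 : ‖f (x - p.1)‖ * ‖fderiv ℝ g (x - p.2)‖
        ≤ (Cf * (2 ^ k * ((1 + ‖x₀ - p.1‖) ^ k)⁻¹))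
          * (Cg' * (2 ^ k * ((1 + ‖x₀ - p.2‖) ^ k)⁻¹)) :=
      mul_le_mul hf1 hdg2 (norm_nonneg _) (by positivity)
    have t2 : ‖g (x - p.2)‖ * ‖fderiv ℝ f (x - p.1)‖
        ≤ (Cg * (2 ^ k * ((1 + ‖x₀ - p.2‖) ^ k)⁻¹))
          * (Cf' * (2 ^ k * ((1 + ‖x₀ - p.1‖) ^ k)⁻¹)) :=
      mul_le_mul hg2 hdf1 (norm_nonneg _) (by positivity)
    calc ‖f (x - p.1)‖ * ‖fderiv ℝ g (x - p.2)‖ + ‖g (x - p.2)‖ * ‖fderiv ℝ f (x - p.1)‖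
        ≤ (Cf * (2 ^ k * ((1 + ‖x₀ - p.1‖) ^ k)⁻¹))
            * (Cg' * (2 ^ k * ((1 + ‖x₀ - p.2‖) ^ k)⁻¹))
          + (Cg * (2 ^ k * ((1 + ‖x₀ - p.2‖) ^ k)⁻¹))
            * (Cf' * (2 ^ k * ((1 + ‖x₀ - p.1‖) ^ k)⁻¹)) := add_le_add t1 t2
      _ = bound p := by rw [hbound, hB]; ring
  have bound_int : Integrable bound (volume : Measure (EE N × EE N)) := by
    have h1 := integrable_h (N := N) x₀ k (by omega)
    have : Integrable (fun p : EE N × EE N =>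
        ((1 + ‖x₀ - p.1‖) ^ k)⁻¹ * ((1 + ‖x₀ - p.2‖) ^ k)⁻¹)
        (volume : Measure (EE N × EE N)) := by
      rw [Measure.volume_eq_prod]; exact h1.mul_prod h1
    exact this.const_mul B
  refine hasFDerivAt_integral_of_dominated_of_fderiv_le (𝕜 := ℝ)
    (F := fun x p => ker θ f g x p) (F' := fun x p => ker' θ f g x p)
    (bound := bound) (s := Metric.ball x₀ 1) (Metric.ball_mem_nhds x₀ one_pos)
    (Filter.Eventually.of_forall fun x => (continuous_ker f g x).aestronglyMeasurable)
    (integrable_ker f g x₀)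
    ((continuous_ker' f g x₀).aestronglyMeasurable)
    (ae_of_all _ fun p x hx => key x (by
      rw [Metric.mem_ball, dist_eq_norm] at hx; exact hx.le) p)
    bound_int
    (ae_of_all _ fun p x _ => hasFDerivAt_ker f g p x)

lemma integrable_ker' (f g : 𝓢(EE N, ℂ)) (x₀ : EE N) :
    Integrable (ker' θ f g x₀) (volume : Measure (EE N × EE N)) := by
  set k : ℕ := 2 * N + 1 with hk
  obtain ⟨Cf, hCf0, hCf⟩ := schwartz_decay f k
  obtain ⟨Cg, hCg0, hCg⟩ := schwartz_decay g k
  obtain ⟨Cf', hCf'0, hCf'⟩ := schwartz_decay (SchwartzMap.fderivCLM ℝ (EE N) ℂ f) k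
  obtain ⟨Cg', hCg'0, hCg'⟩ := schwartz_decay (SchwartzMap.fderivCLM ℝ (EE N) ℂ g) k
  have hDf : ∀ y, ‖fderiv ℝ f y‖ ≤ Cf' * ((1 + ‖y‖) ^ k)⁻¹ := by
    intro y; have := hCf' y; rwa [SchwartzMap.fderivCLM_apply] at this
  have hDg : ∀ y, ‖fderiv ℝ g y‖ ≤ Cg' * ((1 + ‖y‖) ^ k)⁻¹ := by
    intro y; have := hCg' y; rwa [SchwartzMap.fderivCLM_apply] at this
  set B : ℝ := Cf * Cg' + Cg * Cf' with hB
  have h1 := integrable_h (N := N) x₀ k (by omega)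
  have bound_int : Integrable (fun p : EE N × EE N =>
      B * (((1 + ‖x₀ - p.1‖) ^ k)⁻¹ * ((1 + ‖x₀ - p.2‖) ^ k)⁻¹))
      (volume : Measure (EE N × EE N)) := by
    have : Integrable (fun p : EE N × EE N =>
        ((1 + ‖x₀ - p.1‖) ^ k)⁻¹ * ((1 + ‖x₀ - p.2‖) ^ k)⁻¹)
        (volume : Measure (EE N × EE N)) := by
      rw [Measure.volume_eq_prod]; exact h1.mul_prod h1
    exact this.const_mul B
  refine bound_int.mono' (continuous_ker' f g x₀).aestronglyMeasurable
    (ae_of_all _ fun p => ?_)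
  refine (norm_ker'_le f g x₀ p).trans ?_
  have t1 : ‖f (x₀ - p.1)‖ * ‖fderiv ℝ g (x₀ - p.2)‖
      ≤ (Cf * ((1 + ‖x₀ - p.1‖) ^ k)⁻¹) * (Cg' * ((1 + ‖x₀ - p.2‖) ^ k)⁻¹) :=
    mul_le_mul (hCf _) (hDg _) (norm_nonneg _) (by positivity)
  have t2 : ‖g (x₀ - p.2)‖ * ‖fderiv ℝ f (x₀ - p.1)‖
      ≤ (Cg * ((1 + ‖x₀ - p.2‖) ^ k)⁻¹) * (Cf' * ((1 + ‖x₀ - p.1‖) ^ k)⁻¹) :=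
    mul_le_mul (hCg _) (hDf _) (norm_nonneg _) (by positivity)
  calc ‖f (x₀ - p.1)‖ * ‖fderiv ℝ g (x₀ - p.2)‖ + ‖g (x₀ - p.2)‖ * ‖fderiv ℝ f (x₀ - p.1)‖
      ≤ (Cf * ((1 + ‖x₀ - p.1‖) ^ k)⁻¹) * (Cg' * ((1 + ‖x₀ - p.2‖) ^ k)⁻¹)
        + (Cg * ((1 + ‖x₀ - p.2‖) ^ k)⁻¹) * (Cf' * ((1 + ‖x₀ - p.1‖) ^ k)⁻¹) :=
      add_le_add t1 t2
    _ = B * (((1 + ‖x₀ - p.1‖) ^ k)⁻¹ * ((1 + ‖x₀ - p.2‖) ^ k)⁻¹) := by rw [hB]; ring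

lemma ker'_apply (f g : 𝓢(EE N, ℂ)) (x : EE N) (p : EE N × EE N) (v : EE N) :
    ker' θ f g x p v
      = ker θ (LineDeriv.lineDerivOp v f) g x p
        + ker θ f (LineDeriv.lineDerivOp v g) x p := by
  simp only [ker', ker, ContinuousLinearMap.smul_apply, ContinuousLinearMap.add_apply,
    SchwartzMap.lineDerivOp_apply_eq_fderiv, smul_eq_mul]
  ring

end MoyalAux

open MoyalAux in
/-- the Leibniz rule for the Moyal product,
`∂_j(f ⋆_θ g) = (∂_j f) ⋆_θ g + f ⋆_θ (∂_j g)`. -/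
theorem moyal_leibniz (N : ℕ) (θ : ℝ) (hθ : 0 < θ)
    (f g : SchwartzMap ((Fin (2 * N)) → ℝ) ℂ) (j : Fin (2 * N)) (x : Fin (2 * N) → ℝ) :
    fderiv ℝ (moyal N θ (⇑f) (⇑g)) x (Pi.single j 1)
      = moyal N θ (fun y => fderiv ℝ (⇑f) y (Pi.single j 1)) (⇑g) x
        + moyal N θ (⇑f) (fun y => fderiv ℝ (⇑g) y (Pi.single j 1)) x := by
  set v : EE N := Pi.single j 1 with hv
  set c : ℝ := (((Real.pi * θ) ^ (2 * N))⁻¹ : ℝ) with hc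
  have hmf : (fun y => fderiv ℝ (⇑f) y (Pi.single j 1))
      = ⇑(LineDeriv.lineDerivOp v f) := by
    funext y; rw [SchwartzMap.lineDerivOp_apply_eq_fderiv, hv]
  have hmg : (fun y => fderiv ℝ (⇑g) y (Pi.single j 1))
      = ⇑(LineDeriv.lineDerivOp v g) := by
    funext y; rw [SchwartzMap.lineDerivOp_apply_eq_fderiv, hv]
  rw [hmf, hmg]
  have hfun : moyal N θ ⇑f ⇑g = fun x => (c : ℂ) * ∫ p : EE N × EE N, ker θ f g x p :=
    funext fun x => moyal_eq f g x
  have hder : HasFDerivAt (moyal N θ ⇑f ⇑g)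
      ((c : ℂ) • ∫ p : EE N × EE N, ker' θ f g x p) x := by
    rw [hfun]
    exact (moyal_hasFDerivAt f g x).const_mul (c : ℂ)
  rw [hder.fderiv]
  rw [ContinuousLinearMap.smul_apply, ContinuousLinearMap.integral_apply (integrable_ker' f g x) v,
    smul_eq_mul]
  rw [moyal_eq (LineDeriv.lineDerivOp v f) g x, moyal_eq f (LineDeriv.lineDerivOp v g) x]
  rw [← hc, ← mul_add,
    ← integral_add (integrable_ker (LineDeriv.lineDerivOp v f) g x)
      (integrable_ker f (LineDeriv.lineDerivOp v g) x)]
  congr 1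
  exact integral_congr_ae (ae_of_all _ fun p => ker'_apply f g x p v)
end
end
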